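/- The twisted-cube support C(c,ℓ) is closed in ℝ^n if and only if the polytope P(c,ℓ) := {x ∈ ℝ^n : 0 ≤ x_j ≤ A_j(x) for all 1 ≤ j ≤ n} is equal to the convex hull of the finite set {m_σ : σ ∈ {+,−}^n}. -/

import Mathlib

/-- The affine functions `A_j(x) = ℓ_j − Σ_{k>j} c_{jk} x_k` (for the top index the sum
is empty so `A_n = ℓ_n`). Indices are 0-based via `Fin n`. -/
def Afun (n : ℕ) (c : Fin n → Fin n → ℤ) (L : Fin n → ℤ) (j : Fin n) (x : Fin n → ℝ) : ℝ :=
  (L j : ℝ) - ∑ k ∈ Finset.univ.filter (fun k => j < k), (c j k : ℝ) * x k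

/-- Condition (S-k): `A_k(x) < x_k < 0` or `0 ≤ x_k ≤ A_k(x)`. -/
def Scond (n : ℕ) (c : Fin n → Fin n → ℤ) (L : Fin n → ℤ) (k : Fin n) (x : Fin n → ℝ) : Prop :=
  (Afun n c L k x < x k ∧ x k < 0) ∨ (0 ≤ x k ∧ x k ≤ Afun n c L k x)

/-- The twisted-cube support `C(c,ℓ)`. -/
def Cset (n : ℕ) (c : Fin n → Fin n → ℤ) (L : Fin n → ℤ) : Set (Fin n → ℝ) :=
  {x | ∀ k, Scond n c L k x}

/-- The polytope `P(c,ℓ) = {x : 0 ≤ x_j ≤ A_j(x) for all j}`. -/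
def Pset (n : ℕ) (c : Fin n → Fin n → ℤ) (L : Fin n → ℤ) : Set (Fin n → ℝ) :=
  {x | ∀ j, 0 ≤ x j ∧ x j ≤ Afun n c L j x}

/-- Condition (P): for each `k`, whenever the coordinates above `k` satisfy
`0 ≤ x_j ≤ A_j(x)`, one has `A_k(x) ≥ 0`. (For the top index this says `ℓ_n ≥ 0`.) -/
def CondP (n : ℕ) (c : Fin n → Fin n → ℤ) (L : Fin n → ℤ) : Prop :=
  ∀ k : Fin n, ∀ x : Fin n → ℝ,
    (∀ j : Fin n, k < j → 0 ≤ x j ∧ x j ≤ Afun n c L j x) →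
    0 ≤ Afun n c L k x

/-- The Cartier data `m_σ` for a sign vector `σ` (`true` = `+`, `false` = `−`), defined by
downward recursion: `m_{σ,j} = 0` if `σ_j = +`, and `m_{σ,j} = A_j(m_σ)` if `σ_j = −`. -/
noncomputable def mvec (n : ℕ) (c : Fin n → Fin n → ℤ) (L : Fin n → ℤ)
    (σ : Fin n → Bool) (j : Fin n) : ℝ :=
  if σ j then 0
  else (L j : ℝ) - ∑ k ∈ (Finset.univ.filter (fun k => j < k)).attach,
      (c j k.1 : ℝ) * mvec n c L σ k.1
termination_by n - j.1
decreasing_by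
  have hk := Fin.lt_iff_val_lt_val.mp (Finset.mem_filter.mp k.2).2
  have := k.1.isLt
  omega

/-!
If (P) holds (`A_k ≥ 0` whenever the coordinates above `k` satisfy the inequalities of `P`), the
twisted branch `A_k(x) < x_k < 0` of (S-k) is never available, so downward induction gives
`C = P`, a closed set. If (P) fails at `k`, letting `x_k` run through `(A_k(x), 0)` and filling
the lower coordinates suitably gives a curve in `C` whose endpoint at `x_k = A_k(x)` is not in `C`.

`P ⊆ conv {m_σ}` holds unconditionally, by downward induction on `k`: `x` lies on the segment
between `x[k := 0]` and `x[k := A_k(x)]`, and the affine map `y ↦ y[k := A_k(y)]` sends `m_σ` to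
`m_{σ[k := −]}` when `σ` is `+` up to `k`. So `P = conv {m_σ}` iff all `m_σ` lie in `P`, which
is equivalent to (P).
-/

open Finset Function

theorem image_convexHull_subset_of_map_smul_add_smul {𝕜 E F : Type*} [Semiring 𝕜]
    [PartialOrder 𝕜] [AddCommMonoid E] [Module 𝕜 E] [AddCommMonoid F] [Module 𝕜 F] {f : E → F}
    (hf : ∀ x y (a b : 𝕜), 0 ≤ a → 0 ≤ b → a + b = 1 → f (a • x + b • y) = a • f x + b • f y)
    (s : Set E) : f '' convexHull 𝕜 s ⊆ convexHull 𝕜 (f '' s) := by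
  rw [Set.image_subset_iff]
  refine convexHull_min (Set.image_subset_iff.mp (subset_convexHull 𝕜 _)) ?_
  intro x hx y hy a b ha hb hab
  rw [Set.mem_preimage, hf x y a b ha hb hab]
  exact convex_convexHull 𝕜 _ hx hy ha hb hab

section TwistedCube

variable {n : ℕ} {c : Fin n → Fin n → ℤ} {L : Fin n → ℤ}

theorem Afun_congr {j : Fin n} {x y : Fin n → ℝ} (h : ∀ k, j < k → x k = y k) :
    Afun n c L j x = Afun n c L j y := by
  unfold Afun
  congr 1
  exact sum_congr rfl fun k hk => by rw [h k (mem_filter.mp hk).2]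

theorem Afun_update_of_le {i j : Fin n} (h : i ≤ j) (x : Fin n → ℝ) (s : ℝ) :
    Afun n c L j (update x i s) = Afun n c L j x :=
  Afun_congr fun _ hk => update_of_ne (h.trans_lt hk).ne' _ _

theorem Afun_smul_add_smul (j : Fin n) (x y : Fin n → ℝ) {a b : ℝ} (hab : a + b = 1) :
    Afun n c L j (a • x + b • y) = a * Afun n c L j x + b * Afun n c L j y := by
  have hsum : ∑ k ∈ univ.filter (j < ·), (c j k : ℝ) * (a • x + b • y) k =
      a * ∑ k ∈ univ.filter (j < ·), (c j k : ℝ) * x k +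
        b * ∑ k ∈ univ.filter (j < ·), (c j k : ℝ) * y k := by
    rw [mul_sum, mul_sum, ← sum_add_distrib]
    exact sum_congr rfl fun k _ => by simp only [Pi.add_apply, Pi.smul_apply, smul_eq_mul]; ring
  rw [Afun, Afun, Afun, hsum]
  linear_combination (-(L j : ℝ)) * hab

theorem continuous_Afun_comp {X : Type*} [TopologicalSpace X] {j : Fin n} {f : X → Fin n → ℝ}
    (hf : ∀ k, j < k → Continuous fun x => f x k) : Continuous fun x => Afun n c L j (f x) :=
  continuous_const.sub <|
    continuous_finsetSum _ fun k hk => continuous_const.mul (hf k (mem_filter.mp hk).2)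

theorem mvec_eq_ite (σ : Fin n → Bool) (j : Fin n) :
    mvec n c L σ j = if σ j then 0 else Afun n c L j (mvec n c L σ) := by
  rw [mvec, Afun, sum_attach _ fun k => (c j k : ℝ) * mvec n c L σ k]

theorem mvec_eq_zero {σ : Fin n → Bool} {j : Fin n} (h : σ j = true) : mvec n c L σ j = 0 := by
  rw [mvec_eq_ite, if_pos h]

theorem mvec_congr {σ τ : Fin n → Bool} {j : Fin n} (h : ∀ i, j ≤ i → σ i = τ i) :
    mvec n c L σ j = mvec n c L τ j := by
  induction j using WellFoundedGT.induction with
  | _ j ih =>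
    rw [mvec_eq_ite, mvec_eq_ite, h j le_rfl,
      Afun_congr fun k hjk => ih k hjk fun i hki => h i (hjk.le.trans hki)]

theorem mvec_update_of_lt {σ : Fin n → Bool} {j i : Fin n} (h : j < i) (b : Bool) :
    mvec n c L (update σ j b) i = mvec n c L σ i :=
  mvec_congr fun _ hik => update_of_ne (h.trans_le hik).ne' b σ

theorem convex_Pset : Convex ℝ (Pset n c L) := by
  intro x hx y hy a b ha hb hab j
  simp only [Pi.add_apply, Pi.smul_apply, smul_eq_mul, Afun_smul_add_smul j x y hab]
  exact ⟨add_nonneg (mul_nonneg ha (hx j).1) (mul_nonneg hb (hy j).1),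
    add_le_add (mul_le_mul_of_nonneg_left (hx j).2 ha) (mul_le_mul_of_nonneg_left (hy j).2 hb)⟩

theorem isClosed_Pset : IsClosed (Pset n c L) := by
  simp only [Pset, Set.ofPred_forall, Set.ofPred_and]
  exact isClosed_iInter fun j => (isClosed_le continuous_const (continuous_apply j)).inter
    (isClosed_le (continuous_apply j) (continuous_Afun_comp fun k _ => continuous_apply k))

theorem Pset_subset_Cset : Pset n c L ⊆ Cset n c L :=
  fun _ hx k => Or.inr (hx k)

theorem Cset_subset_Pset (hP : CondP n c L) : Cset n c L ⊆ Pset n c L := by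
  intro x hx j
  induction j using WellFoundedGT.induction with
  | _ j ih => exact (hx j).resolve_left fun h => (h.1.trans h.2).not_ge (hP j x ih)

theorem mvec_mem_Pset (hP : CondP n c L) (σ : Fin n → Bool) : mvec n c L σ ∈ Pset n c L := by
  intro j
  induction j using WellFoundedGT.induction with
  | _ j ih =>
    have hA := hP j _ ih
    rw [mvec_eq_ite]
    cases σ j <;> simp [hA]

theorem update_mvec_Afun {σ : Fin n → Bool} {j : Fin n} (hσ : ∀ i, i ≤ j → σ i = true) :
    update (mvec n c L σ) j (Afun n c L j (mvec n c L σ)) = mvec n c L (update σ j false) := by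
  funext i
  rcases lt_trichotomy i j with hij | rfl | hji
  · rw [update_of_ne hij.ne, mvec_eq_zero (hσ i hij.le),
      mvec_eq_zero (by rw [update_of_ne hij.ne]; exact hσ i hij.le)]
  · rw [update_self, mvec_eq_ite, update_self, if_neg Bool.false_ne_true]
    exact Afun_congr fun k hk => (mvec_update_of_lt hk false).symm
  · rw [update_of_ne hji.ne', mvec_update_of_lt hji]

theorem update_Afun_mem_convexHull_mvec {j : Fin n} {y : Fin n → ℝ}
    (hy : y ∈ convexHull ℝ (mvec n c L '' {σ | ∀ i : Fin n, i.1 < j.1 + 1 → σ i = true})) :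
    update y j (Afun n c L j y) ∈
      convexHull ℝ (mvec n c L '' {σ | ∀ i : Fin n, i.1 < j.1 → σ i = true}) := by
  have hraise : ∀ x z (a b : ℝ), 0 ≤ a → 0 ≤ b → a + b = 1 →
      update (a • x + b • z) j (Afun n c L j (a • x + b • z)) =
        a • update x j (Afun n c L j x) + b • update z j (Afun n c L j z) := by
    intro x z a b _ _ hab
    funext i
    rcases eq_or_ne i j with rfl | hij
    · simp [Afun_smul_add_smul i x z hab]
    · simp [update_of_ne hij]
  refine convexHull_mono ?_ <| image_convexHull_subset_of_map_smul_add_smul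
    (f := fun y => update y j (Afun n c L j y)) hraise _ ⟨y, hy, rfl⟩
  rintro _ ⟨_, ⟨σ, hσ, rfl⟩, rfl⟩
  refine ⟨update σ j false, fun i hi => ?_, (update_mvec_Afun fun i hi => hσ i ?_).symm⟩
  · rw [update_of_ne (Fin.val_ne_iff.mp hi.ne)]
    exact hσ i (by omega)
  · exact Nat.lt_succ_of_le hi

theorem mem_convexHull_mvec_of_vanishing_below (k : ℕ) {x : Fin n → ℝ}
    (hzero : ∀ i : Fin n, i.1 < k → x i = 0)
    (hx : ∀ j : Fin n, k ≤ j.1 → 0 ≤ x j ∧ x j ≤ Afun n c L j x) :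
    x ∈ convexHull ℝ (mvec n c L '' {σ | ∀ i : Fin n, i.1 < k → σ i = true}) := by
  by_cases hk : n ≤ k
  · have hx0 : x = mvec n c L fun _ => true :=
      funext fun i => by rw [hzero i (by omega), mvec_eq_zero rfl]
    exact subset_convexHull ℝ _ ⟨_, fun _ _ => rfl, hx0.symm⟩
  obtain ⟨j, rfl⟩ : ∃ j : Fin n, j.1 = k := ⟨⟨k, by omega⟩, rfl⟩
  have hxj := hx j le_rfl
  have hy : update x j 0 ∈
      convexHull ℝ (mvec n c L '' {σ | ∀ i : Fin n, i.1 < j.1 + 1 → σ i = true}) := by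
    refine mem_convexHull_mvec_of_vanishing_below (j.1 + 1) (fun i hi => ?_) (fun i hi => ?_)
    · rcases eq_or_ne i j with rfl | hij
      · exact update_self ..
      · rw [update_of_ne hij]
        exact hzero i (by have := Fin.val_ne_iff.mpr hij; omega)
    · have hji : j < i := Fin.lt_def.mpr (by omega)
      rw [update_of_ne hji.ne', Afun_update_of_le hji.le]
      exact hx i (by omega)
  have hz := update_Afun_mem_convexHull_mvec hy
  rw [update_idem, Afun_update_of_le le_rfl] at hz
  have hseg : x ∈ segment ℝ (update x j 0) (update x j (Afun n c L j x)) := by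
    rw [← Pi.image_update_segment, segment_eq_Icc (hxj.1.trans hxj.2)]
    exact ⟨x j, hxj, update_eq_self j x⟩
  have hsigns : {σ : Fin n → Bool | ∀ i : Fin n, i.1 < j.1 + 1 → σ i = true} ⊆
      {σ | ∀ i : Fin n, i.1 < j.1 → σ i = true} := fun σ hσ i hi => hσ i (by omega)
  exact (convex_convexHull ℝ _).segment_subset
    (convexHull_mono (Set.image_mono hsigns) hy) hz hseg
termination_by n - k

theorem Pset_subset_convexHull_mvec :
    Pset n c L ⊆ convexHull ℝ (Set.range (mvec n c L)) := fun _ hx =>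
  convexHull_mono (Set.image_subset_range _ _)
    (mem_convexHull_mvec_of_vanishing_below 0 (fun _ hi => absurd hi (Nat.not_lt_zero _))
      fun j _ => hx j)

theorem condP_of_range_mvec_subset_Pset (h : Set.range (mvec n c L) ⊆ Pset n c L) :
    CondP n c L := by
  intro k x hx
  set y : Fin n → ℝ := fun i => if k < i then x i else 0
  have hyA : ∀ j, k ≤ j → Afun n c L j y = Afun n c L j x :=
    fun j hj => Afun_congr fun i hi => if_pos (hj.trans_lt hi)
  have hy : y ∈ Pset n c L := by
    refine convexHull_min ((Set.image_subset_range _ _).trans h) convex_Pset <|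
      mem_convexHull_mvec_of_vanishing_below (k.1 + 1) (fun i hi => if_neg ?_) fun j hj => ?_
    · exact not_lt.mpr (Fin.le_def.mpr (by omega))
    · have hkj : k < j := Fin.lt_def.mpr (by omega)
      show 0 ≤ y j ∧ y j ≤ Afun n c L j y
      rw [hyA j hkj.le, show y j = x j from if_pos hkj]
      exact hx j hkj
  exact hyA k le_rfl ▸ (hy k).1.trans (hy k).2

end TwistedCube

/-- Keeps the coordinates `i ≥ k` of `x` and sets each lower one to `min 0 A_i / 2`, which
satisfies (S-i) whatever the sign of `A_i`. -/
noncomputable def completeBelow (n : ℕ) (c : Fin n → Fin n → ℤ) (L : Fin n → ℤ) (k : Fin n)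
    (x : Fin n → ℝ) (i : Fin n) : ℝ :=
  if k ≤ i then x i
  else min 0 ((L i : ℝ) - ∑ j ∈ (univ.filter (fun j => i < j)).attach,
      (c i j.1 : ℝ) * completeBelow n c L k x j.1) / 2
termination_by n - i.1
decreasing_by
  have hj := Fin.lt_def.mp (mem_filter.mp j.2).2
  have := j.1.isLt
  omega

section TwistedCube

variable {n : ℕ} {c : Fin n → Fin n → ℤ} {L : Fin n → ℤ}

theorem completeBelow_eq (k : Fin n) (x : Fin n → ℝ) (i : Fin n) :
    completeBelow n c L k x i =
      if k ≤ i then x i else min 0 (Afun n c L i (completeBelow n c L k x)) / 2 := by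
  rw [completeBelow, Afun, sum_attach _ fun j => (c i j : ℝ) * completeBelow n c L k x j]

theorem completeBelow_of_le {k i : Fin n} (x : Fin n → ℝ) (h : k ≤ i) :
    completeBelow n c L k x i = x i := by
  rw [completeBelow_eq, if_pos h]

theorem continuous_completeBelow (k : Fin n) : Continuous (completeBelow n c L k) := by
  refine continuous_pi fun i => ?_
  induction i using WellFoundedGT.induction with
  | _ i ih =>
    by_cases hki : k ≤ i
    · simp only [completeBelow_of_le _ hki]
      exact continuous_apply i
    · simp only [completeBelow_eq k _ i, if_neg hki]
      exact (continuous_const.min (continuous_Afun_comp ih)).div_const 2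

theorem completeBelow_mem_Cset {k : Fin n} {x : Fin n → ℝ} (hx : ∀ j, k ≤ j → Scond n c L j x) :
    completeBelow n c L k x ∈ Cset n c L := by
  intro i
  by_cases hki : k ≤ i
  · have hA : Afun n c L i (completeBelow n c L k x) = Afun n c L i x :=
      Afun_congr fun j hj => completeBelow_of_le x (hki.trans hj.le)
    simpa only [Scond, hA, completeBelow_of_le x hki] using hx i hki
  · rw [Scond, completeBelow_eq, if_neg hki]
    rcases le_or_gt 0 (Afun n c L i (completeBelow n c L k x)) with h | h
    · rw [min_eq_left h, zero_div]
      exact Or.inr ⟨le_rfl, h⟩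
    · rw [min_eq_right h.le]
      left
      constructor <;> linarith

theorem condP_of_isClosed_Cset (h : IsClosed (Cset n c L)) : CondP n c L := by
  intro k x hx
  by_contra! hA
  set a := Afun n c L k x
  let γ : ℝ → Fin n → ℝ := fun s => completeBelow n c L k (update x k s)
  have hγA : ∀ s, Afun n c L k (γ s) = a := fun s =>
    (Afun_congr fun _ hj => completeBelow_of_le _ hj.le).trans (Afun_update_of_le le_rfl x s)
  have hγk : ∀ s, γ s k = s := fun s => (completeBelow_of_le _ le_rfl).trans (update_self ..)
  have hγ : Continuous γ :=
    (continuous_completeBelow k).comp (continuous_const.update k continuous_id)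
  have hmem : Set.Ioo a 0 ⊆ γ ⁻¹' Cset n c L := fun s hs => completeBelow_mem_Cset fun j hj => by
    rcases hj.eq_or_lt with rfl | hkj
    · left
      rw [update_self, Afun_update_of_le le_rfl]
      exact hs
    · right
      rw [update_of_ne hkj.ne', Afun_update_of_le hkj.le]
      exact hx j hkj
  have ha : a ∈ γ ⁻¹' Cset n c L := (h.preimage hγ).closure_subset_iff.mpr hmem <| by
    rw [closure_Ioo hA.ne]
    exact ⟨le_rfl, hA.le⟩
  rcases ha k with ⟨h1, _⟩ | ⟨h1, _⟩
  · rw [hγA, hγk] at h1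
    exact lt_irrefl a h1
  · rw [hγk] at h1
    exact hA.not_ge h1

theorem isClosed_Cset_iff_condP : IsClosed (Cset n c L) ↔ CondP n c L := by
  refine ⟨condP_of_isClosed_Cset, fun hP => ?_⟩
  rw [(Cset_subset_Pset hP).antisymm Pset_subset_Cset]
  exact isClosed_Pset

theorem Pset_eq_convexHull_mvec_iff_condP :
    Pset n c L = convexHull ℝ (Set.range (mvec n c L)) ↔ CondP n c L := by
  refine ⟨fun h => condP_of_range_mvec_subset_Pset (h ▸ subset_convexHull ℝ _), fun hP => ?_⟩
  exact Pset_subset_convexHull_mvec.antisymm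
    (convexHull_min (Set.range_subset_iff.mpr (mvec_mem_Pset hP)) convex_Pset)

end TwistedCube

theorem isClosed_Cset_iff_Pset_eq_convexHull_general (n : ℕ)
    (c : Fin n → Fin n → ℤ) (L : Fin n → ℤ) :
    IsClosed (Cset n c L) ↔
      Pset n c L = convexHull ℝ (Set.range (fun σ : Fin n → Bool => mvec n c L σ)) :=
  isClosed_Cset_iff_condP.trans Pset_eq_convexHull_mvec_iff_condP.symm

/-- `C(c,ℓ)` is closed iff the polytope `P(c,ℓ)` is the convex hull of
the finite set `{m_σ : σ ∈ {+,−}^n}`. -/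
theorem isClosed_Cset_iff_Pset_eq_convexHull (n : ℕ) (hn : 0 < n)
    (c : Fin n → Fin n → ℤ) (L : Fin n → ℤ) :
    IsClosed (Cset n c L) ↔
      Pset n c L = convexHull ℝ (Set.range (fun σ : Fin n → Bool => mvec n c L σ)) :=
  isClosed_Cset_iff_Pset_eq_convexHull_general n c L
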